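/- arXiv:1906.01450 — 7 statements merged into one kernel-verified Lean document; each statement's English description precedes it below -/
import Mathlib

section
/- Suppose rel satisfies the betweenness property. If a timestamp t satisfies left-weakness (rel[a, t-1] < τ for all a ≤ t-1) and additionally the singleton interval satisfies rel[t,t] < τ, then t+1 also satisfies left-weakness, i.e., rel[a, t] < τ for all a ≤ t. -/
/-- Lemma 1: left-weakness propagates across a weak singleton. -/
theorem left_weakness_step (rel : ℕ → ℕ → ℝ) (τ : ℝ)
    (between : ∀ s m e : ℕ, s ≤ m → m < e →
      min (rel s m) (rel (m + 1) e) ≤ rel s e ∧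
        rel s e ≤ max (rel s m) (rel (m + 1) e))
    (t : ℕ) (ht : 1 ≤ t)
    (hLW : ∀ a : ℕ, 1 ≤ a → a ≤ t - 1 → rel a (t - 1) < τ)
    (hsing : rel t t < τ) :
    ∀ a : ℕ, 1 ≤ a → a ≤ t → rel a t < τ := by
  intro a ha hat
  rcases eq_or_lt_of_le hat with rfl | hlt
  · exact hsing
  · have ham : a ≤ t - 1 := Nat.le_sub_one_of_lt hlt
    have h1 : t - 1 < t := Nat.sub_lt ht one_pos
    have h2 : t - 1 + 1 = t := Nat.succ_pred_eq_of_pos ht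
    have := (between a (t - 1) t ham h1).2
    rw [h2] at this
    exact lt_of_le_of_lt this (max_lt (hLW a ha ham) hsing)
end

section
/- Suppose rel satisfies the betweenness property. Let s ≤ e be timestamps such that rel[s,m] ≥ τ for all m with s ≤ m ≤ e-1, but rel[s,e] < τ. If s satisfies left-weakness (rel[t, s-1] < τ for all t ≤ s-1), then e+1 satisfies left-weakness, i.e., rel[t, e] < τ for all t ≤ e. -/
/-- Lemma 2: after a maximal strong streak starting at a left-weak point `s`,
the point `e+1` is left-weak. -/
theorem left_weakness_after_streak (rel : ℕ → ℕ → ℝ) (τ : ℝ)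
    (between : ∀ s m e : ℕ, s ≤ m → m < e →
      min (rel s m) (rel (m + 1) e) ≤ rel s e ∧
        rel s e ≤ max (rel s m) (rel (m + 1) e))
    (s e : ℕ) (hs : 1 ≤ s) (hse : s ≤ e)
    (hstrong : ∀ m : ℕ, s ≤ m → m + 1 ≤ e → τ ≤ rel s m)
    (hweak : rel s e < τ)
    (hLW : ∀ t : ℕ, 1 ≤ t → t ≤ s - 1 → rel t (s - 1) < τ) :
    ∀ t : ℕ, 1 ≤ t → t ≤ e → rel t e < τ := by
  intro t ht hte
  rcases lt_trichotomy t s with hlt | rfl | hgt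
  · -- t < s : split [t,e] at s-1
    have h1 : t ≤ s - 1 := by omega
    have h2 : s - 1 < e := by omega
    have hb := (between t (s - 1) e h1 h2).2
    have hs1 : s - 1 + 1 = s := by omega
    rw [hs1] at hb
    exact lt_of_le_of_lt hb (max_lt (hLW t ht h1) hweak)
  · exact hweak
  · -- s < t : split [s,e] at t-1
    have h1 : s ≤ t - 1 := by omega
    have h2 : t - 1 < e := by omega
    have hb := (between s (t - 1) e h1 h2).1
    have ht1 : t - 1 + 1 = t := by omega
    rw [ht1] at hb
    have hst : τ ≤ rel s (t - 1) := hstrong (t - 1) h1 (by omega)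
    rcases min_cases (rel s (t - 1)) (rel t e) with ⟨heq, _⟩ | ⟨heq, _⟩
    · linarith [hb, heq]
    · linarith [hb, heq]
end

section
/- Suppose rel satisfies the betweenness property and let s ≤ e with rel[s,m] ≥ τ for all m ∈ [s, e-1] and rel[s,e] < τ. Then every proper suffix is weak: rel[m+1, e] < τ for all m ∈ [s, e-1]. -/
/-- Part 1 of Lemma 2's proof: all proper suffixes of a maximally-strong
interval are weak. -/
theorem suffix_weak (rel : ℕ → ℕ → ℝ) (τ : ℝ)
    (between : ∀ s m e : ℕ, s ≤ m → m < e →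
      min (rel s m) (rel (m + 1) e) ≤ rel s e ∧
        rel s e ≤ max (rel s m) (rel (m + 1) e))
    (s e : ℕ) (hse : s ≤ e)
    (hstrong : ∀ m : ℕ, s ≤ m → m + 1 ≤ e → τ ≤ rel s m)
    (hweak : rel s e < τ) :
    ∀ m : ℕ, s ≤ m → m + 1 ≤ e → rel (m + 1) e < τ := by
  intro m hsm hme
  have h := (between s m e hsm (by omega)).1
  have hs := hstrong m hsm hme
  cases min_cases (rel s m) (rel (m + 1) e) with
  | inl h' => linarith [h'.1, h'.2]
  | inr h' => linarith [h'.1]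
end

section
/- Suppose rel satisfies the betweenness property and timestamp t satisfies both left-weakness (rel[a, t-1] < τ for all a ≤ t-1) and right-weakness (rel[t, b] < τ for all b ≥ t). Then every interval [a, b] with a ≤ t-1 and b ≥ t (i.e., every interval that straddles the partition point t) is weak: rel[a, b] < τ. Consequently, every strong interval (rel[s,e] ≥ τ) lies entirely within {1,...,t-1} or entirely within {t,...,N}. -/
/-- A point of partition is safe: no strong interval straddles a timestamp
satisfying both left-weakness and right-weakness. -/
theorem partition_point_safe (rel : ℕ → ℕ → ℝ) (τ : ℝ) (N : ℕ)
    (between : ∀ s m e : ℕ, s ≤ m → m < e →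
      min (rel s m) (rel (m + 1) e) ≤ rel s e ∧
        rel s e ≤ max (rel s m) (rel (m + 1) e))
    (t : ℕ) (ht : 1 ≤ t)
    (hLW : ∀ a : ℕ, 1 ≤ a → a ≤ t - 1 → rel a (t - 1) < τ)
    (hRW : ∀ b : ℕ, t ≤ b → rel t b < τ) :
    (∀ a b : ℕ, 1 ≤ a → a ≤ t - 1 → t ≤ b → rel a b < τ) ∧
      (∀ s e : ℕ, 1 ≤ s → s ≤ e → e ≤ N → τ ≤ rel s e →
        (e ≤ t - 1 ∨ t ≤ s)) := by
  have key : ∀ a b : ℕ, 1 ≤ a → a ≤ t - 1 → t ≤ b → rel a b < τ := by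
    intro a b ha hat htb
    have hm : t - 1 < b := by omega
    have h := (between a (t - 1) b hat hm).2
    have h1 : t - 1 + 1 = t := by omega
    rw [h1] at h
    exact lt_of_le_of_lt h (max_lt (hLW a ha hat) (hRW b htb))
  refine ⟨key, fun s e hs hse heN hτ => ?_⟩
  by_contra hc
  push_neg at hc
  exact absurd hτ (not_le.mpr (key s e hs (by omega) (by omega)))
end

section
/- Suppose rel satisfies the betweenness property, and suppose rel[t, t] < τ for every timestamp t ∈ [1, s]. Then every timestamp in {1, ..., s+1} satisfies left-weakness: for all u ≤ s+1 and all a ≤ u-1, rel[a, u-1] < τ. -/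
/-- Recursive application of Lemma 1: an initial streak of weak singletons
yields left-weakness for all positions in the streak (and one beyond). -/
theorem streak_left_weakness (rel : ℕ → ℕ → ℝ) (τ : ℝ)
    (between : ∀ s m e : ℕ, s ≤ m → m < e →
      min (rel s m) (rel (m + 1) e) ≤ rel s e ∧
        rel s e ≤ max (rel s m) (rel (m + 1) e))
    (s : ℕ) (hsing : ∀ t : ℕ, 1 ≤ t → t ≤ s → rel t t < τ) :
    ∀ u : ℕ, u ≤ s + 1 → ∀ a : ℕ, 1 ≤ a → a ≤ u - 1 → rel a (u - 1) < τ := by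
  have key : ∀ n a : ℕ, 1 ≤ a → a + n ≤ s → rel a (a + n) < τ := by
    intro n
    induction n with
    | zero => intro a ha hb; exact hsing a ha (by simpa using hb)
    | succ k ih =>
      intro a ha hb
      have h1 : rel a (a + k) < τ := ih a ha (by omega)
      have h2 : rel (a + k + 1) (a + (k + 1)) < τ := by
        have : a + (k + 1) = a + k + 1 := by omega
        rw [this]
        exact hsing _ (by omega) (by omega)
      have := (between a (a + k) (a + (k + 1)) (by omega) (by omega)).2
      exact lt_of_le_of_lt this (max_lt h1 h2)
  intro u hu a ha hab
  have hb : a + (u - 1 - a) = u - 1 := by omega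
  have := key (u - 1 - a) a ha (by omega)
  rwa [hb] at this
end

section
/- Suppose rel satisfies the betweenness property (symmetric version) and timestamp t satisfies right-weakness (rel[t, b] < τ for all b ≥ t). If rel[t-1, t-1] < τ, then t-1 also satisfies right-weakness, i.e., rel[t-1, b] < τ for all b ≥ t-1. -/
/-- Mirror image of Lemma 1: right-weakness propagates across a weak singleton. -/
theorem right_weakness_step (rel : ℕ → ℕ → ℝ) (τ : ℝ)
    (between : ∀ s m e : ℕ, s ≤ m → m < e →
      min (rel s m) (rel (m + 1) e) ≤ rel s e ∧
        rel s e ≤ max (rel s m) (rel (m + 1) e))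
    (t : ℕ) (ht : 2 ≤ t)
    (hRW : ∀ b : ℕ, t ≤ b → rel t b < τ)
    (hsing : rel (t - 1) (t - 1) < τ) :
    ∀ b : ℕ, t - 1 ≤ b → rel (t - 1) b < τ := by
  intro b hb
  rcases eq_or_lt_of_le hb with h | h
  · rwa [← h]
  · have ht1 : t - 1 + 1 = t := Nat.succ_pred_eq_of_pos (Nat.lt_of_lt_of_le Nat.zero_lt_two ht)
    have := (between (t - 1) (t - 1) b le_rfl h).2
    rw [ht1] at this
    exact lt_of_le_of_lt this (max_lt hsing (hRW b (by rw [← ht1]; omega)))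
end

section
/- Suppose rel satisfies the betweenness property and every singleton in {a, ..., b} is weak (rel[t,t] < τ for all t ∈ [a,b]). Then every subinterval of [a,b] is weak: rel[s,e] < τ for all a ≤ s ≤ e ≤ b. -/
/-- If all singletons in `{a, ..., b}` are weak, every subinterval of `[a,b]`
is weak. -/
theorem all_weak_of_singletons_weak (rel : ℕ → ℕ → ℝ) (τ : ℝ)
    (between : ∀ s m e : ℕ, s ≤ m → m < e →
      min (rel s m) (rel (m + 1) e) ≤ rel s e ∧
        rel s e ≤ max (rel s m) (rel (m + 1) e))
    (a b : ℕ) (hsing : ∀ t : ℕ, a ≤ t → t ≤ b → rel t t < τ) :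
    ∀ s e : ℕ, a ≤ s → s ≤ e → e ≤ b → rel s e < τ := by
  intro s e
  induction e with
  | zero => intro h1 h2 h3; interval_cases s; exact hsing 0 h1 h3
  | succ n ih =>
    intro h1 h2 h3
    rcases eq_or_lt_of_le h2 with h | h
    · exact h ▸ hsing s h1 (h ▸ h3)
    · have hse : s ≤ n := Nat.lt_succ_iff.mp h
      have hmax := (between s n (n+1) hse (Nat.lt_succ_self n)).2
      have h1' : rel s n < τ := ih h1 hse (Nat.le_of_succ_le h3)
      have h2' : rel (n+1) (n+1) < τ :=
        hsing (n+1) (le_trans h1 h2) h3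
      calc rel s (n+1) ≤ max (rel s n) (rel (n+1) (n+1)) := hmax
        _ < τ := max_lt h1' h2'
end
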